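/- arXiv:2004.07238 — 2 statements merged into one kernel-verified Lean document; each statement's English description precedes it below -/
import Mathlib

section
/- Let K₀ ⊆ K be fields, V a K-vector space, M ⊆ V a K₀-subspace, and e₀, e₁ ∈ V vectors such that M ∪ {e₀, e₁} is K₀-linearly independent in the sense that e₀, e₁ are linearly independent over the K-span of M. Let t, t' ∈ K with t ∉ K₀ and t' ∉ K₀, and set f = t·e₀ + t'·e₁. Then the K₀-span of M ∪ {e₀,e₁} intersected with the K₀-span of M ∪ {f} equals the K₀-span of M. -/
/-!
Write an element of the intersection as `c₀ • e₀ + c₁ • e₁ + m₁ = b • (t • e₀ + t' • e₁) + m₂`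
with `c₀, c₁, b ∈ K₀` and `m₁, m₂ ∈ span_{K₀} M`. Independence of `e₀, e₁` over `span_K M`
lets us compare `e₀`-coefficients in `K`: `c₀ = b t`. Since `t ∉ K₀`, this forces `b = 0`,
so the element is `m₂ ∈ span_{K₀} M`.
-/

namespace Submodule

theorem mem_span_union_pair_iff {R V : Type*} [Semiring R] [AddCommMonoid V] [Module R V]
    {s : Set V} {a b x : V} :
    x ∈ span R (s ∪ {a, b}) ↔ ∃ c₀ c₁ : R, ∃ m ∈ span R s, x = c₀ • a + c₁ • b + m := by
  simp only [Set.union_insert, Set.union_singleton, mem_span_insert, add_assoc]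
  constructor
  · rintro ⟨c₀, _, ⟨c₁, m, hm, rfl⟩, rfl⟩
    exact ⟨c₀, c₁, m, hm, rfl⟩
  · rintro ⟨c₀, c₁, m, hm, rfl⟩
    exact ⟨c₀, _, ⟨c₁, m, hm, rfl⟩, rfl⟩

end Submodule

section

variable {K V : Type*} [Field K] [AddCommGroup V] [Module K V] {M : Set V} {e₀ e₁ : V}

theorem coeff_left_eq_of_add_eq
    (hindep : ∀ c₀ c₁ : K, ∀ m ∈ Submodule.span K M,
      c₀ • e₀ + c₁ • e₁ + m = 0 → c₀ = 0 ∧ c₁ = 0 ∧ m = 0)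
    {c₀ c₁ d₀ d₁ : K} {m m' : V} (hm : m ∈ Submodule.span K M)
    (hm' : m' ∈ Submodule.span K M)
    (h : c₀ • e₀ + c₁ • e₁ + m = d₀ • e₀ + d₁ • e₁ + m') : c₀ = d₀ :=
  sub_eq_zero.mp <| (hindep (c₀ - d₀) (c₁ - d₁) (m - m') (Submodule.sub_mem _ hm hm')
    (by linear_combination (norm := module) h)).1

end

theorem eq_zero_of_algebraMap_eq_algebraMap_mul {K₀ K : Type*} [Field K₀] [Field K]
    [Algebra K₀ K] {t : K} (ht : t ∉ Set.range (algebraMap K₀ K)) {b c : K₀}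
    (h : algebraMap K₀ K c = algebraMap K₀ K b * t) : b = 0 := by
  by_contra hb
  refine ht ⟨c / b, ?_⟩
  rw [map_div₀, h, mul_div_cancel_left₀ t ((map_ne_zero _).mpr hb)]

theorem span_inter_eq_of_irrational_combination_general
    {K₀ K V : Type*} [Field K₀] [Field K] [Algebra K₀ K]
    [AddCommGroup V] [Module K₀ V] [Module K V] [IsScalarTower K₀ K V]
    (M : Set V) (e₀ e₁ : V)
    (hindep : ∀ c₀ c₁ : K, ∀ m ∈ Submodule.span K M,
      c₀ • e₀ + c₁ • e₁ + m = 0 → c₀ = 0 ∧ c₁ = 0 ∧ m = 0)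
    (t t' : K) (ht : t ∉ Set.range (algebraMap K₀ K)) :
    Submodule.span K₀ (M ∪ {e₀, e₁}) ⊓ Submodule.span K₀ (M ∪ {t • e₀ + t' • e₁}) =
      Submodule.span K₀ M := by
  refine le_antisymm (fun x hx ↦ ?_)
    (le_inf (Submodule.span_mono Set.subset_union_left)
      (Submodule.span_mono Set.subset_union_left))
  obtain ⟨hx₁, hx₂⟩ := Submodule.mem_inf.mp hx
  obtain ⟨c₀, c₁, m₁, hm₁, rfl⟩ := Submodule.mem_span_union_pair_iff.mp hx₁
  rw [Set.union_singleton, Submodule.mem_span_insert] at hx₂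
  obtain ⟨b, m₂, hm₂, hx⟩ := hx₂
  have hM := Submodule.span_le_restrictScalars K₀ K M
  have hcoeff : algebraMap K₀ K c₀ = algebraMap K₀ K b * t := by
    refine coeff_left_eq_of_add_eq hindep (c₁ := algebraMap K₀ K c₁)
      (d₁ := algebraMap K₀ K b * t') (hM hm₁) (hM hm₂) ?_
    simp only [algebraMap_smul, mul_smul, smul_add] at hx ⊢
    linear_combination (norm := module) hx
  rw [hx, eq_zero_of_algebraMap_eq_algebraMap_mul ht hcoeff, zero_smul, zero_add]
  exact hm₂

/-- Example: if `e₀, e₁` are linearly independent over `span_K M` and `t, t' ∉ K₀`,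
then with `f = t•e₀ + t'•e₁` we have
`span_{K₀}(M ∪ {e₀,e₁}) ∩ span_{K₀}(M ∪ {f}) = span_{K₀} M`. -/
theorem span_inter_eq_of_irrational_combination
    {K₀ K V : Type*} [Field K₀] [Field K] [Algebra K₀ K]
    [AddCommGroup V] [Module K₀ V] [Module K V] [IsScalarTower K₀ K V]
    (M : Set V) (e₀ e₁ : V)
    (hindep : ∀ c₀ c₁ : K, ∀ m ∈ Submodule.span K M,
      c₀ • e₀ + c₁ • e₁ + m = 0 → c₀ = 0 ∧ c₁ = 0 ∧ m = 0)
    (t t' : K) (ht : t ∉ Set.range (algebraMap K₀ K))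
    (ht' : t' ∉ Set.range (algebraMap K₀ K)) :
    Submodule.span K₀ (M ∪ {e₀, e₁}) ⊓ Submodule.span K₀ (M ∪ {t • e₀ + t' • e₁}) =
      Submodule.span K₀ M :=
  span_inter_eq_of_irrational_combination_general M e₀ e₁ hindep t t' ht
end

section
/- Let V be a vector space over a field K, and let A, B, C be subsets of V with B ⊆ A ∩ C (as spans: span(B) ⊆ span(A), span(B) ⊆ span(C)). Suppose a₁,…,a_d ∈ A are linearly independent over span(B ∪ C) and every element of A lies in span(B ∪ C ∪ {a₁,…,a_d}) and also every element of A lies in span(B ∪ {a₁,…,a_d}). Then span(A ∪ B) ∩ span(B ∪ C) = span(B). -/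
/-!
Every element of `A` lies in `span B ⊔ span {aᵢ}`, and the independence hypothesis says exactly
that `span {aᵢ}` meets `span (B ∪ C)` trivially. Since `span B ≤ span (B ∪ C)`, the modular law
gives `(span B ⊔ span {aᵢ}) ⊓ span (B ∪ C) = span B ⊔ (span {aᵢ} ⊓ span (B ∪ C)) = span B`.
-/

open Submodule

theorem Submodule.disjoint_span_range_of_forall_sum_mem {R M ι : Type*} [Semiring R]
    [AddCommMonoid M] [Module R M] [Fintype ι] {a : ι → M} {W : Submodule R M}
    (h : ∀ c : ι → R, ∑ i, c i • a i ∈ W → ∀ i, c i = 0) :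
    Disjoint (span R (Set.range a)) W := by
  rw [disjoint_def]
  intro x hx hxW
  obtain ⟨c, rfl⟩ := (mem_span_range_iff_exists_fun R).1 hx
  simp [h c hxW]

theorem span_inter_eq_span_base_general {K V : Type*} [Field K] [AddCommGroup V] [Module K V]
    (A B C : Set V)
    {d : ℕ} (a : Fin d → V)
    (hindep : ∀ c : Fin d → K,
      (∑ i, c i • a i) ∈ Submodule.span K (B ∪ C) → ∀ i, c i = 0)
    (hmaxB : ∀ x ∈ A, x ∈ Submodule.span K (B ∪ Set.range a)) :
    Submodule.span K (A ∪ B) ⊓ Submodule.span K (B ∪ C) = Submodule.span K B := by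
  have hAB : span K (A ∪ B) ≤ span K B ⊔ span K (Set.range a) := by
    rw [← span_union]
    exact span_le.2 (Set.union_subset hmaxB (Set.subset_union_left.trans subset_span))
  have hB : span K B ≤ span K (B ∪ C) := span_mono Set.subset_union_left
  refine le_antisymm ?_ (le_inf (span_mono Set.subset_union_right) hB)
  calc span K (A ∪ B) ⊓ span K (B ∪ C)
      ≤ (span K B ⊔ span K (Set.range a)) ⊓ span K (B ∪ C) := inf_le_inf_right _ hAB
    _ = span K B ⊔ span K (Set.range a) ⊓ span K (B ∪ C) := sup_inf_assoc_of_le _ hB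
    _ = span K B := by
      rw [(disjoint_span_range_of_forall_sum_mem hindep).eq_bot, sup_bot_eq]

/-- If `a₁,…,a_d ∈ A` is simultaneously a maximal subfamily of `A` linearly independent
over `span(B ∪ C)` and over `span B`, then `span(A ∪ B) ∩ span(B ∪ C) = span B`. -/
theorem span_inter_eq_span_base {K V : Type*} [Field K] [AddCommGroup V] [Module K V]
    (A B C : Set V)
    (hBA : Submodule.span K B ≤ Submodule.span K A)
    (hBC : Submodule.span K B ≤ Submodule.span K C)
    {d : ℕ} (a : Fin d → V) (haA : ∀ i, a i ∈ A)
    (hindep : ∀ c : Fin d → K,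
      (∑ i, c i • a i) ∈ Submodule.span K (B ∪ C) → ∀ i, c i = 0)
    (hmaxBC : ∀ x ∈ A, x ∈ Submodule.span K (B ∪ C ∪ Set.range a))
    (hmaxB : ∀ x ∈ A, x ∈ Submodule.span K (B ∪ Set.range a)) :
    Submodule.span K (A ∪ B) ⊓ Submodule.span K (B ∪ C) = Submodule.span K B :=
  span_inter_eq_span_base_general A B C a hindep hmaxB
end
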